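/- Let j and j' be two dangerous clients with r = r_j > r' = r_{j'} and d_max(j') > 0, and suppose d(j,j') ≤ d_max(j)/15 + d_max(j')/10. Then d_max(j') ≤ d_max(j)/6. -/

import Mathlib

open scoped BigOperators

/-- A fractional solution to a fault-tolerant k-median instance: facilities `F`,
clients `C`, requirements `req`, fractional openings `y`, and for each client `j`
a set `Fj j` of the closest `req j` volume of facilities. -/
structure FracSol (X : Type*) [MetricSpace X] where
  F : Finset X
  C : Finset X
  req : X → ℕ
  y : X → ℝ
  Fj : X → Finset X
  req_pos : ∀ j ∈ C, 0 < req j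
  y_pos : ∀ i ∈ F, 0 < y i
  y_le_one : ∀ i ∈ F, y i ≤ 1
  Fj_sub : ∀ j ∈ C, Fj j ⊆ F
  Fj_vol : ∀ j ∈ C, ∑ i ∈ Fj j, y i = (req j : ℝ)
  Fj_closest : ∀ j ∈ C, ∀ i ∈ Fj j, ∀ i' ∈ F, i' ∉ Fj j → dist j i ≤ dist j i'

namespace FracSol

variable {X : Type*} [MetricSpace X]

/-- The quantile (generalized inverse CDF) function `q_j` of the distances from `j`
to the facilities of `F_j`, weighted by `y`: for `x ∈ (s_{l-1}, s_l]` it equals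
`d(j, i_l)`, where facilities are sorted by distance to `j`. -/
noncomputable def q (s : FracSol X) (j : X) (x : ℝ) : ℝ :=
  sInf {D : ℝ | x ≤ ∑ i ∈ (s.Fj j).filter (fun i => dist j i ≤ D), s.y i}

/-- `d_av^t(j) = ∫_{t-1}^{t} q_j(x) dx`. -/
noncomputable def davT (s : FracSol X) (j : X) (t : ℕ) : ℝ :=
  ∫ u in ((t : ℝ) - 1)..(t : ℝ), s.q j u

/-- `d_max^t(j) = q_j(t)`. -/
noncomputable def dmaxT (s : FracSol X) (j : X) (t : ℕ) : ℝ := s.q j (t : ℝ)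

/-- `d_av(j) = (1/r_j) ∫_0^{r_j} q_j(x) dx`. -/
noncomputable def dav (s : FracSol X) (j : X) : ℝ :=
  (1 / (s.req j : ℝ)) * ∫ u in (0 : ℝ)..((s.req j : ℝ)), s.q j u

/-- `d_max(j) = q_j(r_j)`, the maximum distance from `j` to `F_j`. -/
noncomputable def dmax (s : FracSol X) (j : X) : ℝ := s.q j ((s.req j : ℝ))

/-- `Ball(j, L) = {i ∈ F : d(i,j) ≤ L}`. -/
noncomputable def ball (s : FracSol X) (j : X) (L : ℝ) : Finset X :=
  s.F.filter (fun i => dist i j ≤ L)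

/-- `B_j = Ball(j, d_max(j)/15)`. -/
noncomputable def Bset (s : FracSol X) (j : X) : Finset X := s.ball j (s.dmax j / 15)

/-- `y(S) = ∑_{i ∈ S} y_i`. -/
noncomputable def vol (s : FracSol X) (S : Finset X) : ℝ := ∑ i ∈ S, s.y i

/-- A client `j` is dangerous if `d_max(j) ≥ 45 d_av^{r_j}(j)`. -/
def Dangerous (s : FracSol X) (j : X) : Prop :=
  j ∈ s.C ∧ 45 * s.davT j (s.req j) ≤ s.dmax j

/-- Two distinct dangerous clients conflict if they have the same requirement and
`d(j,j') ≤ 6 max{d_av(j), d_av(j')}`. -/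
def Conflict (s : FracSol X) (j j' : X) : Prop :=
  j ≠ j' ∧ s.req j = s.req j' ∧ dist j j' ≤ 6 * max (s.dav j) (s.dav j')

/-- `d_av(j, S) = (∑_{i∈S} d(j,i) y_i) / y(S)`. -/
noncomputable def davS (s : FracSol X) (j : X) (S : Finset X) : ℝ :=
  (∑ i ∈ S, dist j i * s.y i) / s.vol S

/-- Sum of the `r` smallest values among the multiset `{d(j,i) : i ∈ S}`. -/
noncomputable def kSmallestSum (j : X) (S : Finset X) (r : ℕ) : ℝ :=
  (((S.val.map fun i => dist j i).sort (· ≤ ·)).take r).sum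

/-!
Markov's inequality on the last unit interval of the quantile function `q_j` shows that a
dangerous client `j` has facility volume at least `r_j - 1/2 > r_{j'}` within distance
`c ≤ 2 d_max(j)/45` of `j`. By the triangle inequality this volume lies in the ball
`Ball(j', d(j,j') + c)`. As `F_{j'}` consists of the facilities closest to `j'` and has volume
only `r_{j'}`, the ball contains all of `F_{j'}`. Hence `d_max(j') ≤ d_max(j)/9 + d_max(j')/10`,
i.e. `d_max(j') ≤ 10 d_max(j)/81`.
-/

noncomputable def volWithin (s : FracSol X) (j : X) (D : ℝ) : ℝ :=
  s.vol ((s.Fj j).filter fun i => dist j i ≤ D)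

variable (s : FracSol X) {j : X}

theorem q_eq_sInf (x : ℝ) : s.q j x = sInf {D : ℝ | x ≤ s.volWithin j D} := rfl

theorem vol_mono {S T : Finset X} (hT : T ⊆ s.F) (hST : S ⊆ T) : s.vol S ≤ s.vol T :=
  Finset.sum_le_sum_of_subset_of_nonneg hST fun i hi _ => (s.y_pos i (hT hi)).le

theorem volWithin_nonneg (hj : j ∈ s.C) (D : ℝ) : 0 ≤ s.volWithin j D :=
  Finset.sum_nonneg fun i hi => (s.y_pos i (s.Fj_sub j hj (Finset.mem_filter.mp hi).1)).le

theorem volWithin_of_neg {D : ℝ} (hD : D < 0) : s.volWithin j D = 0 := by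
  rw [volWithin, Finset.filter_false_of_mem fun i _ => (hD.trans_le dist_nonneg).not_ge]
  exact Finset.sum_empty

theorem volWithin_eq_req (hj : j ∈ s.C) {D : ℝ} (hD : ∀ i ∈ s.Fj j, dist j i ≤ D) :
    s.volWithin j D = s.req j := by
  rw [volWithin, Finset.filter_true_of_mem hD]
  exact s.Fj_vol j hj

theorem nonneg_of_le_volWithin {x D : ℝ} (hx : 0 < x) (hD : x ≤ s.volWithin j D) : 0 ≤ D := by
  by_contra! hneg
  rw [s.volWithin_of_neg hneg] at hD
  linarith

theorem bddBelow_setOf_le_volWithin {x : ℝ} (hx : 0 < x) :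
    BddBelow {D : ℝ | x ≤ s.volWithin j D} :=
  ⟨0, fun _ hD => s.nonneg_of_le_volWithin hx hD⟩

theorem nonempty_setOf_le_volWithin (hj : j ∈ s.C) {x : ℝ} (hx : x ≤ s.req j) :
    {D : ℝ | x ≤ s.volWithin j D}.Nonempty := by
  obtain ⟨M, hM⟩ := ((s.Fj j).image fun i => dist j i).exists_le
  refine ⟨M, ?_⟩
  show x ≤ s.volWithin j M
  rw [s.volWithin_eq_req hj fun i hi => hM _ (Finset.mem_image_of_mem _ hi)]
  exact hx

/-- `volWithin j` is a finite sum of indicators of closed half-lines `[d(j,i), ∞)`, hence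
upper semicontinuous. -/
theorem isClosed_setOf_le_volWithin (hj : j ∈ s.C) (x : ℝ) :
    IsClosed {D : ℝ | x ≤ s.volWithin j D} := by
  have hsum : s.volWithin j = fun D =>
      ∑ i ∈ s.Fj j, (Set.Ici (dist j i)).indicator (fun _ => s.y i) D := by
    ext D
    simp only [volWithin, vol, Finset.sum_filter, Set.indicator, Set.mem_Ici]
  have husc : UpperSemicontinuous (s.volWithin j) := by
    rw [hsum]
    exact upperSemicontinuous_sum fun i hi =>
      isClosed_Ici.upperSemicontinuous_indicator (s.y_pos i (s.Fj_sub j hj hi)).le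
  exact husc.isClosed_preimage x

theorem le_volWithin_q (hj : j ∈ s.C) {x : ℝ} (hx : 0 < x) (hxr : x ≤ s.req j) :
    x ≤ s.volWithin j (s.q j x) :=
  (s.isClosed_setOf_le_volWithin hj x).csInf_mem (s.nonempty_setOf_le_volWithin hj hxr)
    (s.bddBelow_setOf_le_volWithin hx)

theorem q_of_nonpos (hj : j ∈ s.C) {x : ℝ} (hx : x ≤ 0) : s.q j x = 0 := by
  have huniv : {D : ℝ | x ≤ s.volWithin j D} = Set.univ :=
    Set.eq_univ_of_forall fun D => hx.trans (s.volWithin_nonneg hj D)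
  rw [q_eq_sInf, huniv, Real.sInf_univ]

theorem q_nonneg (hj : j ∈ s.C) (x : ℝ) : 0 ≤ s.q j x := by
  rcases le_or_gt x 0 with hx | hx
  · exact (s.q_of_nonpos hj hx).ge
  · exact Real.sInf_nonneg fun _ hD => s.nonneg_of_le_volWithin hx hD

theorem monotoneOn_q (hj : j ∈ s.C) : MonotoneOn (s.q j) (Set.Iic (s.req j : ℝ)) := by
  intro u _ v hv huv
  rcases le_or_gt u 0 with hu | hu
  · exact (s.q_of_nonpos hj hu).trans_le (s.q_nonneg hj v)
  · exact csInf_le_csInf (s.bddBelow_setOf_le_volWithin hu)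
      (s.nonempty_setOf_le_volWithin hj hv) fun _ hD => huv.trans hD

theorem q_le_of_forall_dist_le (hj : j ∈ s.C) {x D : ℝ} (hx : 0 < x) (hxr : x ≤ s.req j)
    (hD : ∀ i ∈ s.Fj j, dist j i ≤ D) : s.q j x ≤ D :=
  csInf_le (s.bddBelow_setOf_le_volWithin hx) (show x ≤ s.volWithin j D by
    rw [s.volWithin_eq_req hj hD]
    exact hxr)

/-- Markov's inequality for the monotone quantile function on the unit interval `(t-1, t]`. -/
theorem q_sub_half_le_two_mul_davT (hj : j ∈ s.C) {t : ℕ} (ht : t ≤ s.req j) :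
    s.q j (t - 1 / 2) ≤ 2 * s.davT j t := by
  have htr : (t : ℝ) ≤ s.req j := by exact_mod_cast ht
  have hint : ∀ {a b : ℝ}, a ≤ t → b ≤ t →
      IntervalIntegrable (s.q j) MeasureTheory.volume a b :=
    fun ha hb => ((s.monotoneOn_q hj).mono fun _ hu =>
      hu.2.trans ((max_le ha hb).trans htr)).intervalIntegrable
  have hconst : (1 / 2) * s.q j (t - 1 / 2) ≤ ∫ u in ((t : ℝ) - 1 / 2)..t, s.q j u := by
    have := intervalIntegral.integral_mono_on (by linarith : (t : ℝ) - 1 / 2 ≤ t)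
      intervalIntegrable_const (hint (by linarith) le_rfl)
      fun u hu => s.monotoneOn_q hj (Set.mem_Iic.mpr (by linarith))
        (Set.mem_Iic.mpr (hu.2.trans htr)) hu.1
    simpa [intervalIntegral.integral_const] using this
  have hsub : ∫ u in ((t : ℝ) - 1 / 2)..t, s.q j u ≤ s.davT j t :=
    intervalIntegral.integral_mono_interval (by linarith) (by linarith) le_rfl
      (Filter.Eventually.of_forall fun u => s.q_nonneg hj u) (hint (by linarith) le_rfl)
  linarith

/-- If a ball around `j` carries more volume than `r_j`, it cannot be contained in `F_j`,
so by the closest-facility property it contains all of `F_j`. -/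
theorem dmax_le_of_req_lt_vol_ball (hj : j ∈ s.C) {D : ℝ}
    (h : (s.req j : ℝ) < s.vol (s.ball j D)) : s.dmax j ≤ D := by
  refine s.q_le_of_forall_dist_le hj (by exact_mod_cast s.req_pos j hj) le_rfl fun i₀ hi₀ => ?_
  by_contra! hfar
  have hball : s.ball j D ⊆ s.Fj j := fun i hi => by
    obtain ⟨hiF, hiD⟩ := Finset.mem_filter.mp hi
    by_contra hiFj
    have := s.Fj_closest j hj i₀ hi₀ i hiF hiFj
    linarith [dist_comm i j]
  have hvol : s.vol (s.Fj j) = s.req j := s.Fj_vol j hj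
  linarith [s.vol_mono (s.Fj_sub j hj) hball]

theorem filter_dist_le_subset_ball (hj : j ∈ s.C) (j' : X) (D : ℝ) :
    (s.Fj j).filter (fun i => dist j i ≤ D) ⊆ s.ball j' (dist j j' + D) := fun i hi => by
  obtain ⟨hiFj, hiD⟩ := Finset.mem_filter.mp hi
  refine Finset.mem_filter.mpr ⟨s.Fj_sub j hj hiFj, ?_⟩
  linarith [dist_triangle i j j', dist_comm i j]

end FracSol

open FracSol in
theorem dangerous_geometrically_decrease_general {X : Type*} [MetricSpace X]
    (s : FracSol X) (j j' : X) (hd : s.Dangerous j) (hd' : s.Dangerous j')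
    (hlt : s.req j' < s.req j)
    (hdist : dist j j' ≤ s.dmax j / 15 + s.dmax j' / 10) :
    s.dmax j' ≤ s.dmax j / 6 := by
  obtain ⟨hj, hdanger⟩ := hd
  have hr : (s.req j' : ℝ) + 1 ≤ s.req j := by exact_mod_cast hlt
  have hr' : (0 : ℝ) < s.req j' := by exact_mod_cast s.req_pos j' hd'.1
  set c := s.q j (s.req j - 1 / 2)
  have hc : c ≤ 2 * s.davT j (s.req j) := s.q_sub_half_le_two_mul_davT hj le_rfl
  have hvol : (s.req j : ℝ) - 1 / 2 ≤ s.vol (s.ball j' (dist j j' + c)) :=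
    (s.le_volWithin_q hj (by linarith) (by linarith)).trans
      (s.vol_mono (Finset.filter_subset _ _) (s.filter_dist_le_subset_ball hj j' c))
  have hdmax' : s.dmax j' ≤ dist j j' + c := s.dmax_le_of_req_lt_vol_ball hd'.1 (by linarith)
  have hdmax : 0 ≤ s.dmax j := s.q_nonneg hj _
  linarith

open FracSol in
/-- Lemma 4 of the paper: if two dangerous clients with `r_j > r_{j'}` satisfy
`d(j,j') ≤ d_max(j)/15 + d_max(j')/10`, then `d_max(j') ≤ d_max(j)/6`. -/
theorem dangerous_geometrically_decrease {X : Type*} [MetricSpace X]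
    (s : FracSol X) (j j' : X) (hd : s.Dangerous j) (hd' : s.Dangerous j')
    (hlt : s.req j' < s.req j) (h2 : 0 < s.dmax j')
    (hdist : dist j j' ≤ s.dmax j / 15 + s.dmax j' / 10) :
    s.dmax j' ≤ s.dmax j / 6 :=
  dangerous_geometrically_decrease_general s j j' hd hd' hlt hdist
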